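/- arXiv:1209.4332 — 2 statements merged into one kernel-verified Lean document; each statement's English description precedes it below -/
import Mathlib

section
/- Let A be a Boolean algebra with Stone space K_A, and let K be any compact Hausdorff space. Then irr(A) ≤ nbiort_2(K_A) and nbiort_2(K) ≤ s(K²), where K² carries the product topology. -/
open Cardinal Set Topology

universe u

noncomputable section

/-- The spread of a topological space: the supremum of cardinalities of discrete subspaces. -/
def spread (Z : Type u) [TopologicalSpace Z] : Cardinal.{u} :=
  ⨆ D : {D : Set Z // DiscreteTopology D}, #D.1

/-- The density of a topological space: the least cardinality of a dense subset. -/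
def densityCard (Z : Type u) [TopologicalSpace Z] : Cardinal.{u} :=
  ⨅ D : {D : Set Z // Dense D}, #D.1

/-- The hereditary density: the supremum of the densities of all subspaces. -/
def hdens (Z : Type u) [TopologicalSpace Z] : Cardinal.{u} :=
  ⨆ S : Set Z, densityCard S

/-- The Lindelöf degree: the least cardinal κ such that every open cover
has a subcover of cardinality at most κ. -/
def lindelofDeg (Z : Type u) [TopologicalSpace Z] : Cardinal.{u} :=
  sInf {κ | ∀ (ι : Type u) (U : ι → Set Z), (∀ i, IsOpen (U i)) → (⋃ i, U i) = Set.univ →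
    ∃ t : Set ι, #t ≤ κ ∧ (⋃ i ∈ t, U i) = Set.univ}

/-- The hereditary Lindelöf degree: the supremum of the Lindelöf degrees of all subspaces. -/
def hLindelof (Z : Type u) [TopologicalSpace Z] : Cardinal.{u} :=
  ⨆ S : Set Z, lindelofDeg S

/-- A nice biorthogonal system in `C(K)`: a biorthogonal system whose functionals have
the form `δ_{x_i} - δ_{y_i}`. -/
def IsNiceBiorthSys (K : Type u) [TopologicalSpace K] {I : Type u}
    (f : I → C(K, ℝ)) (x y : I → K) : Prop :=
  (∀ i, f i (x i) - f i (y i) = 1) ∧ ∀ i j, i ≠ j → f i (x j) - f i (y j) = 0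

/-- `nbiort2 K`: the supremum of cardinalities of nice biorthogonal systems in `C(K)`. -/
def nbiort2 (K : Type u) [TopologicalSpace K] : Cardinal.{u} :=
  sSup {c | ∃ (I : Type u) (f : I → C(K, ℝ)) (x y : I → K),
    IsNiceBiorthSys K f x y ∧ c = #I}

/-- The underlying set of the Boolean subalgebra generated by a subset of a Boolean algebra. -/
def boolGen {A : Type u} [BooleanAlgebra A] (s : Set A) : Set A :=
  ⋂₀ {t : Set A | s ⊆ t ∧ (⊥ : A) ∈ t ∧ (⊤ : A) ∈ t ∧ (∀ x ∈ t, xᶜ ∈ t) ∧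
      (∀ x ∈ t, ∀ y ∈ t, x ⊔ y ∈ t) ∧ (∀ x ∈ t, ∀ y ∈ t, x ⊓ y ∈ t)}

/-- The irredundance of a Boolean algebra: the supremum of cardinalities of sets `R` such
that no `r ∈ R` belongs to the subalgebra generated by `R \\ {r}`. -/
def irrBool (A : Type u) [BooleanAlgebra A] : Cardinal.{u} :=
  sSup {c | ∃ R : Set A, (∀ r ∈ R, r ∉ boolGen (R \ {r})) ∧ c = #R}

/-- The Stone space of a Boolean algebra `A`: the space of Boolean homomorphisms `A → Bool`
(equivalently, ultrafilters on `A`) with the topology of pointwise convergence, whose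
basic (cl)open sets are `[a] = {u | u a = true}`. -/
abbrev StoneSpace (A : Type u) [BooleanAlgebra A] : Type u :=
  {g : A → Bool // g ⊤ = ⊤ ∧ g ⊥ = ⊥ ∧ (∀ a b, g (a ⊔ b) = g a ⊔ g b) ∧
    (∀ a b, g (a ⊓ b) = g a ⊓ g b)}

instance StoneSpace.compactSpace (A : Type u) [BooleanAlgebra A] :
    CompactSpace (StoneSpace A) := by
  have h2 : ∀ (op : Bool → Bool → Bool) (op' : A → A → A),
      IsClosed {g : A → Bool | ∀ a b, g (op' a b) = op (g a) (g b)} := by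
    intro op op'
    have : {g : A → Bool | ∀ a b, g (op' a b) = op (g a) (g b)}
        = ⋂ (a : A), ⋂ (b : A), {g | g (op' a b) = op (g a) (g b)} := by
      ext g; simp [Set.mem_iInter]
    rw [this]
    exact isClosed_iInter fun a => isClosed_iInter fun b =>
      isClosed_eq (continuous_apply _)
        (show Continuous ((fun p : Bool × Bool => op p.1 p.2) ∘ fun g : A → Bool => (g a, g b))
          from continuous_of_discreteTopology.comp
            ((continuous_apply a).prodMk (continuous_apply b)))
  have h : IsClosed {g : A → Bool | g ⊤ = ⊤ ∧ g ⊥ = ⊥ ∧ (∀ a b, g (a ⊔ b) = g a ⊔ g b) ∧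
      (∀ a b, g (a ⊓ b) = g a ⊓ g b)} := by
    apply IsClosed.inter (isClosed_eq (continuous_apply _) continuous_const)
    apply IsClosed.inter (isClosed_eq (continuous_apply _) continuous_const)
    exact (h2 (· ⊔ ·) (· ⊔ ·)).inter (h2 (· ⊓ ·) (· ⊓ ·))
  exact isCompact_iff_compactSpace.mp h.isCompact

/-!
If `r` does not lie in the Boolean subalgebra `B` generated by `R \ {r}`, a prime ideal of `A`
containing every element of `B` below `r` or below `rᶜ` can be re-extended in two ways, once
avoiding `r` and once avoiding `rᶜ`, without changing its trace on `B`. This gives ultrafilters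
`u_r ∋ r ∌ v_r` that agree on `R \ {r}`, so the indicators of the clopen sets `[r]` together with
the functionals `δ_{u_r} - δ_{v_r}` form a nice biorthogonal system in `C(K_A)`.

For a nice biorthogonal system `(f_i, δ_{x_i} - δ_{y_i})` in `C(K)`, the open set
`{(p, q) | f_i p - f_i q > 1/2}` of `K × K` contains `(x_i, y_i)` and no other `(x_j, y_j)`,
so these points form a discrete subspace of `K × K` of the same cardinality.
-/

namespace Order.Ideal

theorem IsPrime.inf_mem_iff {α : Type*} [SemilatticeInf α] {I : Ideal α} (hI : I.IsPrime)
    {a b : α} : a ⊓ b ∈ I ↔ a ∈ I ∨ b ∈ I :=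
  ⟨hI.mem_or_mem, fun h => h.elim (I.lower inf_le_left) (I.lower inf_le_right)⟩

variable {α : Type*} [DistribLattice α]

theorem exists_isPrime_disjoint_of_infClosed [OrderBot α] {F : Set α} (hne : F.Nonempty)
    (hF : InfClosed F) (hbot : ⊥ ∉ F) : ∃ Q : Ideal α, Q.IsPrime ∧ Disjoint F Q := by
  have hfilter : IsPFilter (upperClosure F : Set α) := by
    refine .of_def (hne.mono subset_upperClosure) ?_ fun hxy hx => (upperClosure F).upper hxy hx
    rintro _ ⟨a, ha, hax⟩ _ ⟨b, hb, hby⟩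
    exact ⟨a ⊓ b, subset_upperClosure (hF ha hb), inf_le_left.trans hax, inf_le_right.trans hby⟩
  have hdisj : Disjoint (hfilter.toPFilter : Set α) (principal (⊥ : α) : Set α) := by
    refine Set.disjoint_left.mpr fun x ⟨a, ha, hax⟩ hx => hbot ?_
    rwa [← le_bot_iff.mp (hax.trans (mem_principal.mp hx))]
  obtain ⟨Q, hQ, -, hFQ⟩ := DistribLattice.prime_ideal_of_disjoint_filter_ideal hdisj
  exact ⟨Q, hQ, hFQ.mono_left subset_upperClosure⟩

theorem exists_isPrime_superset_of_supClosed [OrderTop α] {J : Set α} (hne : J.Nonempty)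
    (hJ : SupClosed J) (htop : ⊤ ∉ J) : ∃ P : Ideal α, P.IsPrime ∧ J ⊆ P := by
  have hideal : IsIdeal (lowerClosure J : Set α) := by
    refine ⟨(lowerClosure J).lower, hne.mono subset_lowerClosure, ?_⟩
    rintro _ ⟨a, ha, hxa⟩ _ ⟨b, hb, hyb⟩
    exact ⟨a ⊔ b, subset_lowerClosure (hJ ha hb), hxa.trans le_sup_left, hyb.trans le_sup_right⟩
  have hdisj : Disjoint (PFilter.principal (⊤ : α) : Set α) (hideal.toIdeal : Set α) := by
    refine Set.disjoint_left.mpr fun x hx ⟨a, ha, hxa⟩ => htop ?_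
    rwa [← top_le_iff.mp ((PFilter.mem_principal.mp hx).trans hxa)]
  obtain ⟨P, hP, hJP, -⟩ := DistribLattice.prime_ideal_of_disjoint_filter_ideal hdisj
  exact ⟨P, hP, subset_lowerClosure.trans hJP⟩

end Order.Ideal

namespace BooleanSubalgebra

open Order Ideal

variable {A : Type*} [BooleanAlgebra A] (B : BooleanSubalgebra A)

theorem exists_isPrime_mem_iff_of_inf_ne_bot {P : Ideal A} (hP : P.IsPrime) {w : A}
    (hw : ∀ b ∈ B, b ∉ P → b ⊓ w ≠ ⊥) :
    ∃ Q : Ideal A, Q.IsPrime ∧ w ∉ Q ∧ ∀ b ∈ B, (b ∈ Q ↔ b ∈ P) := by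
  have htop : (⊤ : A) ∉ P := hP.top_notMem
  set F : Set A := (· ⊓ w) '' {b | b ∈ B ∧ b ∉ P}
  have hinf : InfClosed F := by
    rintro _ ⟨a, ⟨haB, haP⟩, rfl⟩ _ ⟨b, ⟨hbB, hbP⟩, rfl⟩
    refine ⟨a ⊓ b, ⟨B.inf_mem haB hbB, fun h => (hP.mem_or_mem h).elim haP hbP⟩, ?_⟩
    exact inf_inf_distrib_right a b w
  obtain ⟨Q, hQ, hdisj⟩ := exists_isPrime_disjoint_of_infClosed (F := F)
    ⟨⊤ ⊓ w, ⊤, ⟨B.top_mem, htop⟩, rfl⟩ hinf (by rintro ⟨b, ⟨hbB, hbP⟩, hb⟩; exact hw b hbB hbP hb)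
  have hnotQ : ∀ b ∈ B, b ∉ P → b ∉ Q := fun b hbB hbP hbQ =>
    Set.disjoint_left.mp hdisj ⟨b, ⟨hbB, hbP⟩, rfl⟩ (Q.lower inf_le_left hbQ)
  refine ⟨Q, hQ, Set.disjoint_left.mp hdisj ⟨⊤, ⟨B.top_mem, htop⟩, top_inf_eq w⟩, ?_⟩
  intro b hbB
  by_cases hbP : b ∈ P
  · have hcP : bᶜ ∉ P := fun hcP => hP.toIsProper.notMem_of_compl_mem hcP hbP
    have hcQ : bᶜ ∉ Q := hnotQ _ (B.compl_mem hbB) hcP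
    exact iff_of_true (by simpa using hQ.compl_mem_of_notMem hcQ) hbP
  · exact iff_of_false (hnotQ b hbB hbP) hbP

theorem exists_isPrime_separating_of_notMem {r : A} (hr : r ∉ B) :
    ∃ Qu Qv : Ideal A, Qu.IsPrime ∧ Qv.IsPrime ∧ r ∉ Qu ∧ r ∈ Qv ∧
      ∀ b ∈ B, (b ∈ Qu ↔ b ∈ Qv) := by
  -- `a ∈ B` with `a ⊓ r ∈ B` means `a = b ⊔ c` with `b, c ∈ B`, `b ≤ r`, `c ≤ rᶜ`.
  obtain ⟨P, hP, hJP⟩ := exists_isPrime_superset_of_supClosed (J := {a | a ∈ B ∧ a ⊓ r ∈ B})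
    ⟨⊥, B.bot_mem, by simp⟩
    (fun a ⟨haB, harB⟩ b ⟨hbB, hbrB⟩ => ⟨B.sup_mem haB hbB, by
      simpa only [inf_sup_right] using B.sup_mem harB hbrB⟩)
    (fun ⟨_, h⟩ => hr (by simpa using h))
  have hmeet : ∀ b ∈ B, b ∉ P → b ⊓ r ≠ ⊥ := fun b hbB hbP h =>
    hbP (hJP ⟨hbB, h ▸ B.bot_mem⟩)
  have hmeet_compl : ∀ b ∈ B, b ∉ P → b ⊓ rᶜ ≠ ⊥ := fun b hbB hbP h =>
    hbP (hJP ⟨hbB, by rwa [inf_eq_left.mpr (disjoint_compl_right_iff.mp (disjoint_iff.mpr h))]⟩)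
  obtain ⟨Qu, hQu, hrQu, hBu⟩ := B.exists_isPrime_mem_iff_of_inf_ne_bot hP hmeet
  obtain ⟨Qv, hQv, hrQv, hBv⟩ := B.exists_isPrime_mem_iff_of_inf_ne_bot hP hmeet_compl
  exact ⟨Qu, Qv, hQu, hQv, hrQu, by simpa using hQv.compl_mem_of_notMem hrQv,
    fun b hb => (hBu b hb).trans (hBv b hb).symm⟩

end BooleanSubalgebra

section StoneSpace

open Order Ideal

variable {A : Type u} [BooleanAlgebra A]

def boolGenSubalgebra (S : Set A) : BooleanSubalgebra A where
  carrier := boolGen S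
  supClosed' _ ha _ hb t ht := ht.2.2.2.2.1 _ (ha t ht) _ (hb t ht)
  infClosed' _ ha _ hb t ht := ht.2.2.2.2.2 _ (ha t ht) _ (hb t ht)
  compl_mem' ha t ht := ht.2.2.2.1 _ (ha t ht)
  bot_mem' _ ht := ht.2.1

theorem subset_boolGenSubalgebra (S : Set A) : S ⊆ boolGenSubalgebra S :=
  fun _ ha _ ht => ht.1 ha

open Classical in
def StoneSpace.ofIsPrime {Q : Ideal A} (hQ : Q.IsPrime) : StoneSpace A :=
  ⟨fun a => decide (a ∉ Q), by simp [hQ.top_notMem], by simp, fun a b => by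
    simp [sup_mem_iff], fun a b => by simp [hQ.inf_mem_iff]⟩

theorem StoneSpace.ofIsPrime_apply_eq_true {Q : Ideal A} (hQ : Q.IsPrime) {a : A} :
    (ofIsPrime hQ).1 a = true ↔ a ∉ Q := by
  simp [ofIsPrime]

def StoneSpace.indicator (a : A) : C(StoneSpace A, ℝ) where
  toFun g := if g.1 a then 1 else 0
  continuous_toFun :=
    (continuous_of_discreteTopology (f := fun b : Bool => if b then (1 : ℝ) else 0)).comp
      ((continuous_apply a).comp continuous_subtype_val)

theorem StoneSpace.exists_separating_of_notMem_boolGen {S : Set A} {r : A}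
    (hr : r ∉ boolGen S) :
    ∃ u v : StoneSpace A, u.1 r = true ∧ v.1 r = false ∧ ∀ s ∈ S, u.1 s = v.1 s := by
  obtain ⟨Qu, Qv, hQu, hQv, hrQu, hrQv, hS⟩ :=
    (boolGenSubalgebra S).exists_isPrime_separating_of_notMem hr
  refine ⟨ofIsPrime hQu, ofIsPrime hQv, (ofIsPrime_apply_eq_true hQu).mpr hrQu,
    by simpa [← Bool.not_eq_true, ofIsPrime_apply_eq_true] using hrQv, fun s hs => ?_⟩
  rw [Bool.eq_iff_iff, ofIsPrime_apply_eq_true, ofIsPrime_apply_eq_true,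
    hS s (subset_boolGenSubalgebra S hs)]

end StoneSpace

section NiceBiorthogonal

variable {K : Type u} [TopologicalSpace K] {I : Type u} {f : I → C(K, ℝ)} {x y : I → K}

theorem IsNiceBiorthSys.injective_prod (h : IsNiceBiorthSys K f x y) :
    Function.Injective fun i => (x i, y i) := by
  intro i j hij
  by_contra hne
  obtain ⟨hx, hy⟩ : x i = x j ∧ y i = y j := Prod.ext_iff.mp hij
  have hji := h.2 i j hne
  rw [← hx, ← hy, h.1 i] at hji
  exact one_ne_zero hji

theorem IsNiceBiorthSys.mk_le_nbiort2 (h : IsNiceBiorthSys K f x y) : #I ≤ nbiort2 K := by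
  refine le_csSup ⟨#(K × K), ?_⟩ ⟨I, f, x, y, h, rfl⟩
  rintro _ ⟨J, g, x', y', hJ, rfl⟩
  exact mk_le_of_injective hJ.injective_prod

theorem nbiort2_le {κ : Cardinal.{u}}
    (h : ∀ (I : Type u) (f : I → C(K, ℝ)) (x y : I → K), IsNiceBiorthSys K f x y → #I ≤ κ) :
    nbiort2 K ≤ κ :=
  csSup_le ⟨0, PEmpty, PEmpty.elim, PEmpty.elim, PEmpty.elim,
    ⟨fun i => i.elim, fun i => i.elim⟩, (mk_eq_zero _).symm⟩
    fun _ ⟨I, f, x, y, h', hc⟩ => hc ▸ h I f x y h'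

theorem IsNiceBiorthSys.discreteTopology_range (h : IsNiceBiorthSys K f x y) :
    DiscreteTopology (range fun i => (x i, y i)) := by
  rw [discreteTopology_subtype_iff']
  rintro _ ⟨i, rfl⟩
  refine ⟨{p | 1 / 2 < f i p.1 - f i p.2}, isOpen_lt continuous_const (by fun_prop), ?_⟩
  ext p
  constructor
  · rintro ⟨hp, j, rfl⟩
    by_contra hji
    have hp : (1 : ℝ) / 2 < f i (x j) - f i (y j) := hp
    rw [h.2 i j fun hij => hji (hij ▸ rfl)] at hp
    norm_num at hp
  · rintro rfl
    refine ⟨?_, i, rfl⟩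
    show (1 : ℝ) / 2 < f i (x i) - f i (y i)
    rw [h.1 i]
    norm_num

end NiceBiorthogonal

theorem mk_le_spread {Z : Type u} [TopologicalSpace Z] (D : Set Z) [DiscreteTopology D] :
    #D ≤ spread Z :=
  le_ciSup bddAbove_of_small (⟨D, ‹_›⟩ : {D : Set Z // DiscreteTopology D})

theorem nbiort2_le_spread (K : Type u) [TopologicalSpace K] : nbiort2 K ≤ spread (K × K) :=
  nbiort2_le fun _ _ _ _ h =>
    have := h.discreteTopology_range
    (mk_range_eq _ h.injective_prod).symm.trans_le (mk_le_spread _)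

theorem irrBool_le_nbiort2 (A : Type u) [BooleanAlgebra A] :
    irrBool A ≤ nbiort2 (StoneSpace A) := by
  refine csSup_le ⟨0, ∅, by simp, by simp⟩ ?_
  rintro _ ⟨R, hR, rfl⟩
  choose u v hu hv hagree using fun r : R =>
    StoneSpace.exists_separating_of_notMem_boolGen (hR r r.2)
  refine IsNiceBiorthSys.mk_le_nbiort2 (f := fun r : R => StoneSpace.indicator r.1) (x := u)
    (y := v) ⟨fun r => by simp [StoneSpace.indicator, hu, hv], fun r s hrs => ?_⟩
  simp [StoneSpace.indicator, hagree s r ⟨r.2, fun h => hrs (Subtype.ext h)⟩]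

theorem stmt17_general (A : Type u) [BooleanAlgebra A]
    (K : Type u) [TopologicalSpace K] :
    irrBool A ≤ nbiort2 (StoneSpace A) ∧ nbiort2 K ≤ spread (K × K) :=
  ⟨irrBool_le_nbiort2 A, nbiort2_le_spread K⟩

/-- For a Boolean algebra `A` with Stone space `K_A` and any compact Hausdorff
space `K`: `irr(A) ≤ nbiort₂(K_A)` and `nbiort₂(K) ≤ s(K²)`. -/
theorem stmt17 (A : Type u) [BooleanAlgebra A]
    (K : Type u) [TopologicalSpace K] [CompactSpace K] [T2Space K] :
    irrBool A ≤ nbiort2 (StoneSpace A) ∧ nbiort2 K ≤ spread (K × K) :=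
  stmt17_general A K

end
end

section
/- Let K be a compact Hausdorff space. Then sbiort_1(C(K)) = hL(K): the supremum of cardinalities of semibiorthogonal sequences (f_i, μ_i) in C(K) × M(K) in which every μ_i is 1-supported equals the hereditary Lindelöf degree of K. Consequently hL(K) ≤ sbiort(C(K)). -/
open Cardinal Set Topology

universe u

noncomputable section

/-- An `n`-supported functional on `C(K, ℝ)`: a linear combination of `n` point
evaluations (Dirac measures). -/
def NSupported (K : Type u) [TopologicalSpace K] [CompactSpace K] (n : ℕ)
    (μ : C(K, ℝ) →L[ℝ] ℝ) : Prop :=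
  ∃ (x : Fin n → K) (a : Fin n → ℝ), μ = ∑ i, a i • ContinuousMap.evalCLM ℝ (x i)

/-- A semibiorthogonal sequence (indexed by a linearly ordered type, in applications the
set of ordinals below a given ordinal): `f_i (x_i) = 1`, `f_i (x_j) = 0` for `j < i`, and
`f_i (x_j) ≥ 0` for `i < j`. -/
def IsSemiBiorthSeq {X : Type u} [NormedAddCommGroup X] [NormedSpace ℝ X]
    {I : Type u} [LinearOrder I] (x : I → X) (f : I → (X →L[ℝ] ℝ)) : Prop :=
  (∀ i, f i (x i) = 1) ∧ (∀ i j, j < i → f i (x j) = 0) ∧ (∀ i j, i < j → 0 ≤ f i (x j))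

/-- `sbiort X`: the supremum of the cardinalities of the lengths of semibiorthogonal
sequences in `X × X*`. -/
def sbiort (X : Type u) [NormedAddCommGroup X] [NormedSpace ℝ X] : Cardinal.{u} :=
  sSup {c | ∃ (o : Ordinal.{u}) (x : o.ToType → X) (f : o.ToType → (X →L[ℝ] ℝ)),
    IsSemiBiorthSeq x f ∧ c = #o.ToType}

/-- `sbiortN K n`: the supremum of the cardinalities of the lengths of semibiorthogonal
sequences in `C(K) × M(K)` all of whose functionals are `n`-supported. -/
def sbiortN (K : Type u) [TopologicalSpace K] [CompactSpace K] (n : ℕ) : Cardinal.{u} :=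
  sSup {c | ∃ (o : Ordinal.{u}) (f : o.ToType → C(K, ℝ)) (μ : o.ToType → (C(K, ℝ) →L[ℝ] ℝ)),
    IsSemiBiorthSeq f μ ∧ (∀ i, NSupported K n (μ i)) ∧ c = #o.ToType}


/-! A point evaluation `a • δ_x` kills `f` exactly when `f x = 0`, so for a semibiorthogonal
sequence `(f_i, a_i δ_{x_i})` the open sets `{f_i ≠ 0}` separate each `x_i` from all later
points: the supports form a right-separated sequence. Conversely, Urysohn functions for a
right-separated sequence together with its point evaluations are semibiorthogonal. So
`sbiort₁(C(K))` is the supremum of the lengths of right-separated sequences in `K`, and this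
supremum is `hL(K)`: a subspace `S` with `L(S) > κ` has an open cover without subcover of size
`≤ κ`, from which a transfinite recursion extracts a right-separated sequence of length `κ⁺`;
and a right-separated sequence of regular length `κ` has range of Lindelöf degree at least `κ`,
since any subcover of the separating cover is cofinal (for finite `κ` the range is discrete);
every cardinal is a supremum of such `κ`. -/

theorem WellFoundedLT.exists_forall_of_forall_exists {α β : Type*} [Preorder α] [WellFoundedLT α]
    {P : (a : α) → (Iio a → β) → β → Prop} (h : ∀ a g, ∃ b, P a g b) :
    ∃ g : α → β, ∀ a, P a (fun c => g c) (g a) := by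
  let g : α → β := WellFoundedLT.fix fun a prev => (h a fun c => prev c c.2).choose
  refine ⟨g, fun a => ?_⟩
  rw [show g a = _ from WellFoundedLT.fix_eq _ a]
  exact (h a _).choose_spec

theorem Cardinal.le_of_forall_le_of_isRegular {c a : Cardinal.{u}}
    (h : ∀ κ ≤ c, (κ < ℵ₀ ∨ κ.IsRegular) → κ ≤ a) : c ≤ a := by
  rcases lt_or_ge c ℵ₀ with hc | hc
  · exact h c le_rfl (Or.inl hc)
  refine le_of_forall_lt fun b hb => ?_
  rcases lt_or_ge b ℵ₀ with hb' | hb'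
  · exact hb'.trans_le (h ℵ₀ hc (Or.inr isRegular_aleph0))
  · exact (Order.lt_succ b).trans_le (h _ (Order.succ_le_of_lt hb) (Or.inr (isRegular_succ hb')))

theorem exists_subcover_mk_le {Y ι : Type u} (U : ι → Set Y) (hcov : (⋃ i, U i) = Set.univ) :
    ∃ t : Set ι, #t ≤ #Y ∧ (⋃ i ∈ t, U i) = Set.univ := by
  choose φ hφ using fun y => mem_iUnion.mp (hcov ▸ mem_univ y : y ∈ ⋃ i, U i)
  exact ⟨range φ, mk_range_le, eq_univ_of_forall fun y => mem_biUnion ⟨y, rfl⟩ (hφ y)⟩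

section Lindelof

variable {Z : Type u} [TopologicalSpace Z]

theorem lindelofDeg_le {κ : Cardinal.{u}}
    (h : ∀ (ι : Type u) (U : ι → Set Z), (∀ i, IsOpen (U i)) → (⋃ i, U i) = Set.univ →
      ∃ t : Set ι, #t ≤ κ ∧ (⋃ i ∈ t, U i) = Set.univ) :
    lindelofDeg Z ≤ κ :=
  csInf_le (OrderBot.bddBelow _) h

theorem lindelofDeg_le_mk : lindelofDeg Z ≤ #Z :=
  lindelofDeg_le fun _ U _ hcov => exists_subcover_mk_le U hcov

theorem le_lindelofDeg_of_cover {κ : Cardinal.{u}} {ι : Type u} (U : ι → Set Z)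
    (hU : ∀ i, IsOpen (U i)) (hcov : (⋃ i, U i) = Set.univ)
    (h : ∀ t : Set ι, (⋃ i ∈ t, U i) = Set.univ → κ ≤ #t) :
    κ ≤ lindelofDeg Z := by
  refine le_csInf ⟨#Z, fun _ U _ hcov => exists_subcover_mk_le U hcov⟩ fun κ' hκ' => ?_
  obtain ⟨t, ht, htcov⟩ := hκ' ι U hU hcov
  exact (h t htcov).trans ht

theorem exists_cover_of_lt_lindelofDeg {κ : Cardinal.{u}} (h : κ < lindelofDeg Z) :
    ∃ (ι : Type u) (U : ι → Set Z), (∀ i, IsOpen (U i)) ∧ (⋃ i, U i) = Set.univ ∧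
      ∀ t : Set ι, #t ≤ κ → (⋃ i ∈ t, U i) ≠ Set.univ := by
  by_contra! H
  exact (lindelofDeg_le H).not_gt h

theorem mk_le_lindelofDeg [DiscreteTopology Z] : #Z ≤ lindelofDeg Z := by
  refine le_lindelofDeg_of_cover (fun z : Z => {z}) (fun _ => isOpen_discrete _)
    (iUnion_of_singleton Z) fun t ht => ?_
  rw [biUnion_of_singleton] at ht
  rw [ht, mk_univ]

theorem lindelofDeg_le_hLindelof (S : Set Z) : lindelofDeg S ≤ hLindelof Z :=
  le_ciSup ⟨#Z, by rintro _ ⟨S, rfl⟩; exact lindelofDeg_le_mk.trans (mk_set_le S)⟩ S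

end Lindelof

section RightSeparated

def RightSeparated {X I : Type*} [TopologicalSpace X] [LT I] (x : I → X) : Prop :=
  ∀ i, ∃ U : Set X, IsOpen U ∧ x i ∈ U ∧ ∀ j, i < j → x j ∉ U

variable {X : Type u} [TopologicalSpace X]

theorem RightSeparated.injective {I : Type*} [LinearOrder I] {x : I → X}
    (hx : RightSeparated x) : Function.Injective x := by
  refine Function.Injective.of_lt_imp_ne fun i j hij heq => ?_
  obtain ⟨U, -, hmem, hout⟩ := hx i
  exact hout j hij (heq ▸ hmem)

theorem RightSeparated.comp_strictMono {I J : Type*} [Preorder I] [Preorder J] {x : I → X}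
    (hx : RightSeparated x) {e : J → I} (he : StrictMono e) : RightSeparated (x ∘ e) := by
  intro i
  obtain ⟨U, hU, hmem, hout⟩ := hx (e i)
  exact ⟨U, hU, hmem, fun j hj => hout (e j) (he hj)⟩

theorem RightSeparated.subtypeVal {I : Type*} [LT I] {S : Set X} {x : I → S}
    (hx : RightSeparated x) : RightSeparated fun i => (x i : X) := by
  intro i
  obtain ⟨U, hU, hmem, hout⟩ := hx i
  obtain ⟨V, hV, rfl⟩ := isOpen_induced_iff.mp hU
  exact ⟨V, hV, hmem, hout⟩

theorem RightSeparated.cof_le_lindelofDeg_range {I : Type u} [LinearOrder I] {x : I → X}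
    (hx : RightSeparated x) : Order.cof I ≤ lindelofDeg (range x) := by
  choose V hV hmem hout using hx
  refine le_lindelofDeg_of_cover (fun i => Subtype.val ⁻¹' V i)
    (fun i => (hV i).preimage continuous_subtype_val)
    (eq_univ_of_forall fun ⟨_, i, rfl⟩ => mem_iUnion.mpr ⟨i, hmem i⟩) fun t ht => ?_
  -- `x i` lies in no `V j` with `j < i`, so the subcover is cofinal
  refine Order.cof_le fun i => ?_
  obtain ⟨j, hj, hij⟩ := mem_iUnion₂.mp (ht ▸ mem_univ (⟨x i, i, rfl⟩ : range x))
  exact ⟨j, hj, not_lt.mp fun hji => hout j i hji hij⟩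

def rightSepLengths (X : Type u) [TopologicalSpace X] : Set Cardinal.{u} :=
  {c | ∃ (o : Ordinal.{u}) (x : o.ToType → X), RightSeparated x ∧ c = #o.ToType}

theorem zero_mem_rightSepLengths : 0 ∈ rightSepLengths X :=
  ⟨0, isEmptyElim, isEmptyElim, (mk_eq_zero _).symm⟩

theorem bddAbove_rightSepLengths : BddAbove (rightSepLengths X) :=
  ⟨#X, by rintro _ ⟨o, x, hx, rfl⟩; exact mk_le_of_injective hx.injective⟩

theorem exists_rightSeparated_of_lt_lindelofDeg {κ : Cardinal.{u}} (h : κ < lindelofDeg X) :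
    ∃ x : (Order.succ κ).ord.ToType → X, RightSeparated x := by
  obtain ⟨ι, U, hU, hcov, hno⟩ := exists_cover_of_lt_lindelofDeg h
  -- at stage `a` at most `κ` sets have been used, so some point `s` is still uncovered
  have step : ∀ (a : (Order.succ κ).ord.ToType) (prev : Iio a → X × ι),
      ∃ p : X × ι, p.1 ∈ U p.2 ∧ ∀ c, p.1 ∉ U (prev c).2 := by
    intro a prev
    have ht : #(range fun c => (prev c).2) ≤ κ :=
      mk_range_le.trans (Order.lt_succ_iff.mp (by simpa using mk_Iio_lt a))
    obtain ⟨s, hs⟩ := (ne_univ_iff_exists_notMem _).mp (hno _ ht)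
    obtain ⟨i, hi⟩ := mem_iUnion.mp (hcov ▸ mem_univ s : s ∈ ⋃ i, U i)
    exact ⟨(s, i), hi, fun c hc => hs (mem_biUnion ⟨c, rfl⟩ hc)⟩
  obtain ⟨g, hg⟩ := WellFoundedLT.exists_forall_of_forall_exists step
  exact ⟨fun a => (g a).1, fun a =>
    ⟨U (g a).2, hU _, (hg a).1, fun b hab => (hg b).2 ⟨a, hab⟩⟩⟩

theorem hLindelof_le_sSup_rightSepLengths : hLindelof X ≤ sSup (rightSepLengths X) := by
  refine ciSup_le fun S => not_lt.mp fun h => ?_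
  obtain ⟨x, hx⟩ := exists_rightSeparated_of_lt_lindelofDeg h
  have := le_csSup bddAbove_rightSepLengths ⟨_, _, hx.subtypeVal, rfl⟩
  rw [mk_toType, card_ord] at this
  exact (Order.lt_succ _).not_ge this

theorem RightSeparated.exists_of_ord_le {o : Ordinal.{u}} {x : o.ToType → X}
    (hx : RightSeparated x) {κ : Cardinal.{u}} (hκ : κ.ord ≤ o) :
    ∃ y : κ.ord.ToType → X, RightSeparated y := by
  have hle : Ordinal.type (α := κ.ord.ToType) (· < ·) ≤ Ordinal.type (α := o.ToType) (· < ·) := by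
    rwa [Ordinal.type_toType, Ordinal.type_toType]
  obtain ⟨e⟩ := Ordinal.type_le_iff'.mp hle
  exact ⟨_, hx.comp_strictMono fun _ _ => e.map_rel_iff.mpr⟩

theorem le_hLindelof_of_rightSeparated [T1Space X] {κ : Cardinal.{u}} {y : κ.ord.ToType → X}
    (hy : RightSeparated y) (hreg : κ < ℵ₀ ∨ κ.IsRegular) : κ ≤ hLindelof X := by
  refine le_trans ?_ (lindelofDeg_le_hLindelof (range y))
  rcases hreg with hfin | hreg
  · have hcard : #(range y) = κ := by rw [mk_range_eq _ hy.injective, mk_ord_toType]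
    have := lt_aleph0_iff_finite.mp (hcard ▸ hfin)
    exact hcard.symm.trans_le mk_le_lindelofDeg
  · simpa [Ordinal.cof_toType, hreg.cof_ord] using hy.cof_le_lindelofDeg_range

theorem sSup_rightSepLengths_le_hLindelof [T1Space X] :
    sSup (rightSepLengths X) ≤ hLindelof X := by
  refine csSup_le ⟨0, zero_mem_rightSepLengths⟩ fun _ ⟨o, _, hx, hc⟩ => ?_
  refine hc ▸ le_of_forall_le_of_isRegular fun κ hκ hreg => ?_
  rw [mk_toType, ← ord_le] at hκ
  obtain ⟨y, hy⟩ := hx.exists_of_ord_le hκ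
  exact le_hLindelof_of_rightSeparated hy hreg

theorem hLindelof_eq_sSup_rightSepLengths [T1Space X] :
    hLindelof X = sSup (rightSepLengths X) :=
  le_antisymm hLindelof_le_sSup_rightSepLengths sSup_rightSepLengths_le_hLindelof

end RightSeparated

section Semibiorthogonal

theorem IsSemiBiorthSeq.injective {X I : Type u} [NormedAddCommGroup X] [NormedSpace ℝ X]
    [LinearOrder I] {x : I → X} {f : I → X →L[ℝ] ℝ} (h : IsSemiBiorthSeq x f) :
    Function.Injective x := by
  refine Function.Injective.of_lt_imp_ne fun i j hij heq => ?_
  have := h.1 j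
  rw [← heq, h.2.1 j i hij] at this
  exact zero_ne_one this

variable {K : Type u} [TopologicalSpace K] [CompactSpace K]

theorem nSupported_one_iff {μ : C(K, ℝ) →L[ℝ] ℝ} :
    NSupported K 1 μ ↔ ∃ (x : K) (a : ℝ), μ = a • ContinuousMap.evalCLM ℝ x := by
  simp only [NSupported, Fin.sum_univ_one]
  exact ⟨fun ⟨x, a, h⟩ => ⟨x 0, a 0, h⟩, fun ⟨x, a, h⟩ => ⟨fun _ => x, fun _ => a, h⟩⟩

theorem IsSemiBiorthSeq.rightSeparated {I : Type u} [LinearOrder I] {f : I → C(K, ℝ)}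
    {x : I → K} {a : I → ℝ} (h : IsSemiBiorthSeq f fun i => a i • ContinuousMap.evalCLM ℝ (x i)) :
    RightSeparated x := by
  obtain ⟨hdiag, hbelow, -⟩ := h
  simp only [smul_apply, ContinuousMap.evalCLM_apply, smul_eq_mul] at hdiag hbelow
  refine fun i => ⟨f i ⁻¹' {0}ᶜ, isOpen_compl_singleton.preimage (f i).continuous,
    right_ne_zero_of_mul_eq_one (hdiag i), fun j hij hj => hj ?_⟩
  exact (mul_eq_zero.mp (hbelow j i hij)).resolve_left (left_ne_zero_of_mul_eq_one (hdiag j))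

theorem RightSeparated.exists_isSemiBiorthSeq [T2Space K] {I : Type u} [LinearOrder I]
    {x : I → K} (hx : RightSeparated x) :
    ∃ f : I → C(K, ℝ), IsSemiBiorthSeq f fun i => ContinuousMap.evalCLM ℝ (x i) := by
  choose V hV hmem hout using hx
  choose f hf0 hf1 hf01 using fun i => exists_continuous_zero_one_of_isClosed
    (hV i).isClosed_compl isClosed_singleton
    (disjoint_singleton_right.mpr fun h => h (hmem i))
  exact ⟨f, fun i => hf1 i rfl, fun i j hji => hf0 j (hout j i hji), fun i j _ => (hf01 j _).1⟩

theorem sbiortN_one_eq_sSup_rightSepLengths [T2Space K] :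
    sbiortN K 1 = sSup (rightSepLengths K) := by
  simp only [sbiortN, nSupported_one_iff]
  congr 1
  ext c
  constructor
  · rintro ⟨o, f, μ, h, hμ, rfl⟩
    choose x a hμ using hμ
    exact ⟨o, x, (funext hμ ▸ h).rightSeparated, rfl⟩
  · rintro ⟨o, x, hx, rfl⟩
    obtain ⟨f, hf⟩ := hx.exists_isSemiBiorthSeq
    exact ⟨o, f, _, hf, fun i => ⟨x i, 1, (one_smul _ _).symm⟩, rfl⟩

theorem sbiortN_le_sbiort (n : ℕ) : sbiortN K n ≤ sbiort C(K, ℝ) := by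
  refine csSup_le_csSup ⟨#C(K, ℝ), ?_⟩ ⟨0, 0, isEmptyElim, isEmptyElim,
      ⟨isEmptyElim, isEmptyElim, isEmptyElim⟩, isEmptyElim, (mk_eq_zero _).symm⟩ ?_
  · rintro _ ⟨o, x, f, h, rfl⟩
    exact mk_le_of_injective h.injective
  · rintro _ ⟨o, f, μ, h, -, rfl⟩
    exact ⟨o, f, μ, h, rfl⟩

end Semibiorthogonal

/-- For a compact Hausdorff space `K`, `sbiort₁(C(K)) = hL(K)`;
consequently `hL(K) ≤ sbiort(C(K))`. -/
theorem stmt18 (K : Type u) [TopologicalSpace K] [CompactSpace K] [T2Space K] :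
    sbiortN K 1 = hLindelof K ∧ hLindelof K ≤ sbiort C(K, ℝ) := by
  have h : sbiortN K 1 = hLindelof K := by
    rw [sbiortN_one_eq_sSup_rightSepLengths, hLindelof_eq_sSup_rightSepLengths]
  exact ⟨h, h ▸ sbiortN_le_sbiort 1⟩
end
end
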